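/- For smooth vector fields X and Y on a manifold M and any point m in the intersection of their domains, the Lie bracket satisfies [X,Y](m) = d/dt|₀ of Fl^Y_{−√t}(Fl^X_{−√t}(Fl^Y_{√t}(Fl^X_{√t}(m)))), i.e., the bracket is the derivative at t = 0⁺ of the commutator-of-flows curve reparametrized by √t. -/

import Mathlib

open Set Asymptotics Filter Metric
open scoped Topology

section
variable {E : Type*} [NormedAddCommGroup E] [NormedSpace ℝ E]

/-- Bootstrap / continuous induction: if the derivative is bounded by `M` *as long as*
the solution stays within `r` of its start, and `M * T < r`, then on `[0, T]` the solution
satisfies `‖f u - f 0‖ ≤ M * u`. -/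
lemma stay_aux {E : Type*} [NormedAddCommGroup E] [NormedSpace ℝ E]
    (f v : ℝ → E) (hf : ∀ u, HasDerivAt f (v u) u)
    (T r M : ℝ) (hT : 0 ≤ T) (hM : 0 ≤ M) (hMT : M * T < r)
    (hbound : ∀ u ∈ Set.Icc 0 T, ‖f u - f 0‖ ≤ r → ‖v u‖ ≤ M) :
    ∀ u ∈ Set.Icc 0 T, ‖f u - f 0‖ ≤ M * u := by
  set S : Set ℝ := {t ∈ Set.Icc 0 T | ∀ u ∈ Set.Icc 0 t, ‖f u - f 0‖ ≤ M * u} with hS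
  have h0 : (0:ℝ) ∈ S := by
    refine ⟨⟨le_refl 0, hT⟩, fun u hu => ?_⟩
    have : u = 0 := le_antisymm hu.2 hu.1
    simp [this]
  have hSne : S.Nonempty := ⟨0, h0⟩
  have hSbdd : BddAbove S := ⟨T, fun t ht => ht.1.2⟩
  set t₀ := sSup S with ht₀
  have ht₀0 : 0 ≤ t₀ := le_csSup hSbdd h0
  have ht₀T : t₀ ≤ T := csSup_le hSne fun t ht => ht.1.2
  have ht₀S : t₀ ∈ S := by
    refine ⟨⟨ht₀0, ht₀T⟩, fun u hu => ?_⟩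
    rcases lt_or_eq_of_le hu.2 with h | h
    · obtain ⟨t, htS, hut⟩ := exists_lt_of_lt_csSup hSne h
      exact htS.2 u ⟨hu.1, hut.le⟩
    · rcases eq_or_lt_of_le hu.1 with h0' | h0'
      · simp [← h0']
      · -- u = t₀ > 0; take limit from the left
        have hne : (𝓝[<] u).NeBot := nhdsLT_neBot u
        refine le_of_tendsto (f := fun s => ‖f s - f 0‖) (x := 𝓝[Set.Iio u] u) ?_ ?_
        · exact ((((hf u).continuousAt.sub continuousAt_const).norm).continuousWithinAt
            (s := Set.Iio u)).tendsto
        · filter_upwards [Ioo_mem_nhdsLT_of_mem ⟨h0', le_refl u⟩] with s hs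
          calc ‖f s - f 0‖ ≤ M * s := by
                obtain ⟨t, htS, hst⟩ := exists_lt_of_lt_csSup hSne (h ▸ hs.2)
                exact htS.2 s ⟨hs.1.le, hst.le⟩
            _ ≤ M * u := by nlinarith [hs.2]
  have hTt : t₀ = T := by
    by_contra hne
    have ht₀T' : t₀ < T := lt_of_le_of_ne ht₀T hne
    have hrm : 0 < r - M * T := by linarith
    obtain ⟨δ, hδ0, hδ⟩ := Metric.continuousAt_iff.1 (hf t₀).continuousAt (r - M * T) hrm
    set t₁ := min (t₀ + δ / 2) T with ht₁
    have ht₀t₁ : t₀ < t₁ := lt_min (by linarith) ht₀T'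
    have ht₁T : t₁ ≤ T := min_le_right _ _
    have hrad : ∀ u ∈ Set.Icc 0 t₁, ‖f u - f 0‖ ≤ r := by
      intro u hu
      rcases le_or_gt u t₀ with h | h
      · calc ‖f u - f 0‖ ≤ M * u := ht₀S.2 u ⟨hu.1, h⟩
          _ ≤ M * T := by nlinarith [hu.2, ht₁T]
          _ ≤ r := hMT.le
      · have hd : dist u t₀ < δ := by
          rw [Real.dist_eq, abs_of_pos (by linarith)]
          have : u ≤ t₀ + δ / 2 := le_trans hu.2 (min_le_left _ _)
          linarith
        calc ‖f u - f 0‖ ≤ ‖f u - f t₀‖ + ‖f t₀ - f 0‖ := norm_sub_le_norm_sub_add_norm_sub _ _ _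
          _ ≤ (r - M * T) + M * t₀ := by
              refine add_le_add ?_ (ht₀S.2 t₀ ⟨ht₀0, le_refl _⟩)
              rw [← dist_eq_norm]
              exact (hδ hd).le
          _ ≤ r := by nlinarith [ht₀T]
    have hmvt := norm_image_sub_le_of_norm_deriv_le_segment'
      (f := f) (f' := v) (a := 0) (b := t₁)
      (fun x _ => (hf x).hasDerivWithinAt)
      (fun x hx => hbound x ⟨hx.1, le_trans hx.2.le ht₁T⟩
        (hrad x ⟨hx.1, hx.2.le⟩))
    have ht₁S : t₁ ∈ S := by
      refine ⟨⟨le_trans ht₀0 ht₀t₁.le, ht₁T⟩, fun u hu => ?_⟩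
      have := hmvt u hu
      simpa using this
    exact absurd (le_csSup hSbdd ht₁S) (not_le.2 ht₀t₁)
  intro u hu
  exact ht₀S.2 u ⟨hu.1, hu.2.trans_eq hTt.symm⟩

lemma smul_const_isBigO {α : Type*} (l : Filter α) (f : α → ℝ) (w : E) :
    (fun s => f s • w) =O[l] f := by
  rw [isBigO_iff]
  exact ⟨‖w‖, by filter_upwards with s; rw [norm_smul, mul_comm]⟩

lemma sq_isBigO_self : (fun s : ℝ => s ^ 2) =O[𝓝 0] fun s => s := by
  rw [isBigO_iff]
  refine ⟨1, ?_⟩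
  have h1 : ∀ᶠ s : ℝ in 𝓝 0, |s| < 1 := by
    have := Metric.ball_mem_nhds (0 : ℝ) one_pos
    simp only [Metric.ball, Real.dist_eq, sub_zero] at this
    exact this
  filter_upwards [h1] with s hs
  rw [Real.norm_eq_abs, Real.norm_eq_abs, one_mul, abs_pow]
  nlinarith [abs_nonneg s]

set_option maxHeartbeats 2000000 in
lemma flow_taylor2 (Z : E → E) (hZ : ContDiff ℝ (⊤ : ℕ∞) Z) (φ : ℝ → E → E)
    (hφ0 : ∀ x, φ 0 x = x)
    (hφ : ∀ t x, HasDerivAt (fun s => φ s x) (Z (φ t x)) t)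
    (m : E) (c : ℝ) (hc : c = 1 ∨ c = -1)
    (x : ℝ → E)
    (hxmO : (fun s => x s - m) =O[𝓝 0] fun s => s) :
    (fun s => φ (c * s) (x s) - x s - (c * s) • Z (x s)
      - (1/2 * s ^ 2 : ℝ) • (fderiv ℝ Z (x s) (Z (x s)))) =o[𝓝 0] fun s => s ^ 2 := by
  have hZd : Differentiable ℝ Z := hZ.differentiable (by simp)
  have hZc : Continuous Z := hZ.continuous
  have hDZc : Continuous (fderiv ℝ Z) := hZ.continuous_fderiv (by simp)
  set A := fderiv ℝ Z m with hA
  rw [isLittleO_iff]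
  intro ε hε
  set M := ‖Z m‖ + 1 with hMdef
  have hM1 : 1 ≤ M := by have := norm_nonneg (Z m); linarith
  have hM0 : 0 < M := by linarith
  obtain ⟨ρ, hρ0, hρ⟩ : ∃ ρ > 0, ∀ z : E, dist z m < ρ → ‖Z z‖ ≤ M := by
    obtain ⟨ρ, hρ0, h⟩ := Metric.continuousAt_iff.1 (hZc.continuousAt (x := m)) 1 one_pos
    refine ⟨ρ, hρ0, fun z hz => ?_⟩
    have h2 := h hz
    rw [dist_eq_norm] at h2
    have h3 := norm_sub_norm_le (Z z) (Z m)
    rw [hMdef]; linarith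
  set ε1 := min 1 (ε / (4 * M)) with hε1def
  have hε1pos : 0 < ε1 := lt_min one_pos (by positivity)
  set ε2 := ε / (4 * (‖A‖ + 2)) with hε2def
  have hε2pos : 0 < ε2 := by positivity
  obtain ⟨δ₁, hδ₁0, hδ₁⟩ : ∃ δ > 0, ∀ z : E, dist z m < δ → ‖fderiv ℝ Z z - A‖ < ε1 := by
    obtain ⟨δ, hδ0, h⟩ := Metric.continuousAt_iff.1 (hDZc.continuousAt (x := m)) ε1 hε1pos
    exact ⟨δ, hδ0, fun z hz => by simpa [dist_eq_norm] using h hz⟩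
  obtain ⟨δ₂, hδ₂0, hδ₂⟩ : ∃ δ > 0, ∀ z : E, dist z m < δ → ‖Z z - Z m‖ < ε2 / 2 := by
    obtain ⟨δ, hδ0, h⟩ := Metric.continuousAt_iff.1 (hZc.continuousAt (x := m)) (ε2 / 2)
      (by positivity)
    exact ⟨δ, hδ0, fun z hz => by simpa [dist_eq_norm] using h hz⟩
  obtain ⟨C₀, hC₀0, hC₀w⟩ := hxmO.exists_nonneg
  have hC₀b : ∀ᶠ s : ℝ in 𝓝 0, ‖x s - m‖ ≤ C₀ * ‖s‖ := hC₀w.bound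
  set δm := min (ρ / 2) (min δ₁ δ₂) with hδmdef
  have hδm0 : 0 < δm := lt_min (by positivity) (lt_min hδ₁0 hδ₂0)
  have hδmρ : δm ≤ ρ / 2 := min_le_left _ _
  have hδmδ₁ : δm ≤ δ₁ := le_trans (min_le_right _ _) (min_le_left _ _)
  have hδmδ₂ : δm ≤ δ₂ := le_trans (min_le_right _ _) (min_le_right _ _)
  set K := C₀ + M with hKdef
  have hK0 : 0 < K := by linarith
  have hsmall : ∀ᶠ s : ℝ in 𝓝 0, |s| < δm / K := by
    have := Metric.ball_mem_nhds (0 : ℝ) (show (0:ℝ) < δm / K by positivity)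
    simp only [Metric.ball, Real.dist_eq, sub_zero] at this
    exact this
  filter_upwards [hC₀b, hsmall] with s hs1 hs2
  rcases eq_or_ne s 0 with rfl | hs0
  · simp [hφ0]
  · set T := |s| with hTdef
    have hT0 : 0 < T := abs_pos.2 hs0
    set y := x s with hy
    set d := c * s / |s| with hd
    have hceq : c * c = 1 := by rcases hc with h | h <;> simp [h]
    have hss : (0:ℝ) < s * s := mul_self_pos.2 hs0
    have hdd : d * d = 1 := by
      rw [hd, div_mul_div_comm, abs_mul_abs_self,
        show c * s * (c * s) = c * c * (s * s) by ring, hceq, one_mul, div_self hss.ne']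
    have hd1 : |d| = 1 := by nlinarith [abs_nonneg d, abs_mul_abs_self d]
    have hdT : d * T = c * s := by
      rw [hd, hTdef, div_mul_eq_mul_div, mul_div_assoc, div_self (abs_pos.2 hs0).ne', mul_one]
    have hKT : K * T < δm := by
      rw [lt_div_iff₀ hK0] at hs2
      rw [mul_comm]
      exact hs2
    have hym : ‖y - m‖ ≤ C₀ * T := by simpa [Real.norm_eq_abs] using hs1
    have hMKT : M * T ≤ K * T :=
      mul_le_mul_of_nonneg_right (by rw [hKdef]; linarith) hT0.le
    have hCKT : C₀ * T ≤ K * T :=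
      mul_le_mul_of_nonneg_right (by rw [hKdef]; linarith) hT0.le
    have hMT : M * T < ρ / 2 := lt_of_le_of_lt hMKT (hKT.trans_le hδmρ)
    have hyρ : ‖y - m‖ < ρ / 2 :=
      lt_of_le_of_lt (hym.trans hCKT) (hKT.trans_le hδmρ)
    -- bootstrap: the trajectory stays close
    set f : ℝ → E := fun u => φ (d * u) y with hfdef
    set vv : ℝ → E := fun u => d • Z (φ (d * u) y) with hvvdef
    have hf : ∀ u, HasDerivAt f (vv u) u := by
      intro u
      have h1 : HasDerivAt (fun t => φ t y) (Z (φ (d * u) y)) (d * u) := hφ (d * u) y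
      have h2 : HasDerivAt (fun u : ℝ => d * u) d u := by
        simpa using (hasDerivAt_id u).const_mul d
      exact h1.scomp u h2
    have hf0 : f 0 = y := by simp [hfdef, hφ0]
    have hstay : ∀ u ∈ Set.Icc 0 T, ‖f u - f 0‖ ≤ M * u := by
      apply stay_aux f vv hf T (ρ / 2) M hT0.le (by linarith) hMT
      intro u hu hfu
      have hz : dist (φ (d * u) y) m < ρ := by
        rw [dist_eq_norm]
        have : ‖φ (d * u) y - y‖ ≤ ρ / 2 := by
          rw [hf0] at hfu; simpa [hfdef] using hfu
        calc ‖φ (d * u) y - m‖ ≤ ‖φ (d * u) y - y‖ + ‖y - m‖ :=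
              norm_sub_le_norm_sub_add_norm_sub _ _ _
          _ < ρ := by linarith
      have h2 := hρ _ hz
      rw [hvvdef]
      simp only [norm_smul, Real.norm_eq_abs, hd1, one_mul]
      exact h2
    -- all trajectory points are in the small ball
    have hmem : ∀ u ∈ Set.Icc 0 T, dist (φ (d * u) y) m < δm := by
      intro u hu
      rw [dist_eq_norm]
      have h1 : ‖φ (d * u) y - y‖ ≤ M * u := by
        have := hstay u hu; rwa [hf0] at this
      calc ‖φ (d * u) y - m‖ ≤ ‖φ (d * u) y - y‖ + ‖y - m‖ :=
            norm_sub_le_norm_sub_add_norm_sub _ _ _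
        _ ≤ M * u + C₀ * T := add_le_add h1 hym
        _ ≤ M * T + C₀ * T := by
            have := mul_le_mul_of_nonneg_left hu.2 (le_of_lt hM0)
            linarith
        _ = K * T := by rw [hKdef]; ring
        _ < δm := hKT
    have hymem : dist y m < δm := by
      have := hmem 0 ⟨le_refl 0, hT0.le⟩
      simpa [hφ0] using this
    -- first order: ‖φ (d u) y - y - (d u) • Z y‖ ≤ ε2 * u
    set h1f : ℝ → E := fun u => f u - u • (d • Z y) with hh1def
    have hh1 : ∀ u, HasDerivAt h1f (vv u - d • Z y) u := by
      intro u
      exact (hf u).sub (by simpa using (hasDerivAt_id u).smul_const (d • Z y))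
    have hquad : ∀ u ∈ Set.Icc 0 T, ‖h1f u - h1f 0‖ ≤ ε2 * u := by
      intro u hu
      have := norm_image_sub_le_of_norm_deriv_le_segment'
        (f := h1f) (f' := fun u => vv u - d • Z y) (a := 0) (b := T) (C := ε2)
        (fun u _ => (hh1 u).hasDerivWithinAt) ?_ u hu
      · simpa using this
      · intro u hu
        show ‖vv u - d • Z y‖ ≤ ε2
        have hrw : vv u - d • Z y = d • (Z (φ (d * u) y) - Z y) := by
          rw [hvvdef]; rw [smul_sub]
        rw [hrw, norm_smul, Real.norm_eq_abs, hd1, one_mul]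
        have hz1 := hδ₂ _ ((hmem u ⟨hu.1, hu.2.le⟩).trans_le hδmδ₂)
        have hz2 := hδ₂ _ (hymem.trans_le hδmδ₂)
        calc ‖Z (φ (d * u) y) - Z y‖
            ≤ ‖Z (φ (d * u) y) - Z m‖ + ‖Z m - Z y‖ := norm_sub_le_norm_sub_add_norm_sub _ _ _
          _ ≤ ε2 / 2 + ε2 / 2 := by
              rw [norm_sub_rev (Z m)]
              exact add_le_add hz1.le hz2.le
          _ = ε2 := by ring
    -- second order comparison function
    set Gf : ℝ → E := fun u => f u - y - (d * u) • Z y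
        - (u ^ 2 * (1/2 : ℝ)) • (fderiv ℝ Z y (Z y)) with hGdef
    have hG : ∀ u, HasDerivAt Gf (vv u - d • Z y - u • (fderiv ℝ Z y (Z y))) u := by
      intro u
      have h3 : HasDerivAt (fun u : ℝ => (d * u) • Z y) (d • Z y) u := by
        simpa using ((hasDerivAt_id u).const_mul d).smul_const (Z y)
      have h4 : HasDerivAt (fun u : ℝ => (u ^ 2 * (1/2 : ℝ)) • (fderiv ℝ Z y (Z y)))
          (u • (fderiv ℝ Z y (Z y))) u := by
        have h5 := ((hasDerivAt_pow 2 u).mul_const (1/2 : ℝ)).smul_const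
          (fderiv ℝ Z y (Z y))
        have h6 : ((2 : ℕ) : ℝ) * u ^ (2 - 1) * (1/2 : ℝ) = u := by push_cast; ring
        rw [h6] at h5
        exact h5
      exact (((hf u).sub_const y).sub h3).sub h4
    have hGb : ∀ u ∈ Set.Ico 0 T, ‖vv u - d • Z y - u • (fderiv ℝ Z y (Z y))‖
        ≤ (ε1 * (2 * M) + ε2 * (‖A‖ + 1)) * T := by
      intro u hu
      have hzmem : φ (d * u) y ∈ Metric.ball m δ₁ :=
        Metric.mem_ball.2 ((hmem u ⟨hu.1, hu.2.le⟩).trans_le hδmδ₁)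
      have hymem1 : y ∈ Metric.ball m δ₁ := Metric.mem_ball.2 (hymem.trans_le hδmδ₁)
      have hTay : ‖Z (φ (d * u) y) - Z y - (fderiv ℝ Z y) (φ (d * u) y - y)‖ ≤ (ε1 + ε1) * ‖φ (d * u) y - y‖ := by
        have hF := Convex.norm_image_sub_le_of_norm_fderiv_le
          (f := fun p => Z p - (fderiv ℝ Z y) p) (s := Metric.ball m δ₁)
          (C := ε1 + ε1)
          (fun p _ => (hZd p).sub ((fderiv ℝ Z y).differentiableAt))
          (fun p hp => by
            rw [fderiv_fun_sub (hZd p) ((fderiv ℝ Z y).differentiableAt),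
              (fderiv ℝ Z y).fderiv]
            have l1 := hδ₁ p (Metric.mem_ball.1 hp)
            have l2 := hδ₁ y (Metric.mem_ball.1 hymem1)
            calc ‖fderiv ℝ Z p - fderiv ℝ Z y‖
                ≤ ‖fderiv ℝ Z p - A‖ + ‖A - fderiv ℝ Z y‖ :=
                  norm_sub_le_norm_sub_add_norm_sub _ _ _
              _ ≤ ε1 + ε1 := add_le_add l1.le (by rw [norm_sub_rev]; exact l2.le))
          (convex_ball m δ₁) hymem1 hzmem
        have hee : Z (φ (d * u) y) - (fderiv ℝ Z y) (φ (d * u) y) - (Z y - (fderiv ℝ Z y) y)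
            = Z (φ (d * u) y) - Z y - (fderiv ℝ Z y) (φ (d * u) y - y) := by
          rw [map_sub]; abel
        rwa [hee] at hF
      have hzy : ‖φ (d * u) y - y‖ ≤ M * u := by
        have hst := hstay u ⟨hu.1, hu.2.le⟩
        rw [hf0] at hst
        exact hst
      have hDZy : ‖fderiv ℝ Z y‖ ≤ ‖A‖ + 1 := by
        have l2 := hδ₁ y (hymem.trans_le hδmδ₁)
        have l3 : ε1 ≤ 1 := min_le_left _ _
        have l4 := norm_sub_norm_le (fderiv ℝ Z y) A
        linarith
      have hq : ‖φ (d * u) y - y - (d * u) • Z y‖ ≤ ε2 * u := by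
        have hqq := hquad u ⟨hu.1, hu.2.le⟩
        have e0 : h1f 0 = y := by simp [hh1def, hf0]
        have e1 : h1f u = f u - (d * u) • Z y := by
          simp only [hh1def, smul_smul, mul_comm u d]
        have he : h1f u - h1f 0 = φ (d * u) y - y - (d * u) • Z y := by
          rw [e0, e1]
          simp only [hfdef]
          abel
        rwa [he] at hqq
      have hrew : vv u - d • Z y - u • (fderiv ℝ Z y (Z y))
          = d • (Z (φ (d * u) y) - Z y - (fderiv ℝ Z y) (φ (d * u) y - y))
            + d • ((fderiv ℝ Z y) (φ (d * u) y - y - (d * u) • Z y)) := by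
        have hmu : d * (d * u) = u := by rw [← mul_assoc, hdd, one_mul]
        simp only [hvvdef, map_sub, map_smul, smul_sub, smul_smul, hmu]
        abel
      rw [hrew]
      calc ‖d • (Z (φ (d * u) y) - Z y - (fderiv ℝ Z y) (φ (d * u) y - y))
            + d • ((fderiv ℝ Z y) (φ (d * u) y - y - (d * u) • Z y))‖
          ≤ ‖d • (Z (φ (d * u) y) - Z y - (fderiv ℝ Z y) (φ (d * u) y - y))‖
            + ‖d • ((fderiv ℝ Z y) (φ (d * u) y - y - (d * u) • Z y))‖ := norm_add_le _ _
        _ = ‖Z (φ (d * u) y) - Z y - (fderiv ℝ Z y) (φ (d * u) y - y)‖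
            + ‖(fderiv ℝ Z y) (φ (d * u) y - y - (d * u) • Z y)‖ := by
            rw [norm_smul, norm_smul, Real.norm_eq_abs, hd1, one_mul, one_mul]
        _ ≤ (ε1 + ε1) * ‖φ (d * u) y - y‖ + ‖fderiv ℝ Z y‖ * ‖φ (d * u) y - y - (d * u) • Z y‖ :=
            add_le_add hTay ((fderiv ℝ Z y).le_opNorm _)
        _ ≤ (ε1 + ε1) * (M * u) + (‖A‖ + 1) * (ε2 * u) := by
            refine add_le_add (mul_le_mul_of_nonneg_left hzy (by linarith [hε1pos])) ?_
            exact mul_le_mul hDZy hq (norm_nonneg _) (by positivity)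
        _ = (ε1 * (2 * M) + ε2 * (‖A‖ + 1)) * u := by ring
        _ ≤ (ε1 * (2 * M) + ε2 * (‖A‖ + 1)) * T := by
            have h1 : 0 ≤ ε1 * (2 * M) := mul_nonneg hε1pos.le (by linarith)
            have h2 : 0 ≤ ε2 * (‖A‖ + 1) := mul_nonneg hε2pos.le (by positivity)
            exact mul_le_mul_of_nonneg_left hu.2.le (by linarith)
    have hGmvt : ‖Gf T - Gf 0‖ ≤ (ε1 * (2 * M) + ε2 * (‖A‖ + 1)) * T * (T - 0) := by
      refine norm_image_sub_le_of_norm_deriv_le_segment'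
        (f' := fun u => vv u - d • Z y - u • (fderiv ℝ Z y (Z y)))
        (fun u _ => (hG u).hasDerivWithinAt) ?_ T ⟨hT0.le, le_refl T⟩
      intro u hu
      show ‖vv u - d • Z y - u • (fderiv ℝ Z y (Z y))‖ ≤ _
      exact hGb u hu
    have hG0 : Gf 0 = 0 := by simp [hGdef, hfdef, hφ0]
    rw [hG0, sub_zero, sub_zero] at hGmvt
    have hT2 : T ^ 2 * (1/2 : ℝ) = 1/2 * s ^ 2 := by rw [hTdef, sq_abs]; ring
    have hGT : Gf T = φ (c * s) y - y - (c * s) • Z y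
        - (1/2 * s ^ 2 : ℝ) • (fderiv ℝ Z y (Z y)) := by
      simp only [hGdef, hfdef]
      rw [hdT, hT2]
    have hnorm : ‖s ^ 2‖ = T * T := by
      rw [Real.norm_eq_abs, abs_pow, hTdef, pow_two]
    rw [← hGT]
    calc ‖Gf T‖ ≤ (ε1 * (2 * M) + ε2 * (‖A‖ + 1)) * T * T := hGmvt
      _ ≤ ε * ‖s ^ 2‖ := by
        rw [hnorm]
        have e1 : ε1 * (2 * M) ≤ ε / 2 := by
          have l1 : ε1 ≤ ε / (4 * M) := min_le_right _ _
          have l5 := mul_le_mul_of_nonneg_right l1 (by positivity : (0:ℝ) ≤ 2 * M)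
          have l6 : ε / (4 * M) * (2 * M) = ε / 2 := by
            field_simp
            ring
          linarith
        have e2 : ε2 * (‖A‖ + 1) ≤ ε / 4 := by
          have l1 : ε2 * (‖A‖ + 1) ≤ ε2 * (‖A‖ + 2) :=
            mul_le_mul_of_nonneg_left (show ‖A‖ + 1 ≤ ‖A‖ + 2 by linarith) hε2pos.le
          have l2 : ε2 * (‖A‖ + 2) = ε / 4 := by
            rw [hε2def]
            field_simp
          linarith
        have e3 : ε1 * (2 * M) + ε2 * (‖A‖ + 1) ≤ ε := by
          have h34 : ε / 2 + ε / 4 ≤ ε := by linarith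
          calc ε1 * (2 * M) + ε2 * (‖A‖ + 1) ≤ ε / 2 + ε / 4 := add_le_add e1 e2
            _ ≤ ε := h34
        nlinarith [mul_nonneg hT0.le hT0.le,
          mul_le_mul_of_nonneg_right e3 (mul_nonneg hT0.le hT0.le)]

lemma flow_step (Z : E → E) (hZ : ContDiff ℝ (⊤ : ℕ∞) Z) (φ : ℝ → E → E)
    (hφ0 : ∀ x, φ 0 x = x)
    (hφ : ∀ t x, HasDerivAt (fun s => φ s x) (Z (φ t x)) t)
    (m : E) (c : ℝ) (hc : c = 1 ∨ c = -1)
    (x : ℝ → E) (v w : E)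
    (hx : (fun s => x s - m - s • v - s ^ 2 • w) =o[𝓝 0] fun s => s ^ 2) :
    (fun s => φ (c * s) (x s) - m - s • (v + c • Z m)
      - s ^ 2 • (w + c • (fderiv ℝ Z m v) + (1/2 : ℝ) • (fderiv ℝ Z m (Z m))))
      =o[𝓝 0] fun s => s ^ 2 := by
  have hZd : Differentiable ℝ Z := hZ.differentiable (by simp)
  have hZc : Continuous Z := hZ.continuous
  have hDZc : Continuous (fderiv ℝ Z) := hZ.continuous_fderiv (by simp)
  set A := fderiv ℝ Z m with hA
  -- basic big-O facts about x
  have hxO2 : (fun s => x s - m - s • v - s ^ 2 • w) =O[𝓝 0] fun s => s ^ 2 := hx.isBigO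
  have hxvO : (fun s => x s - m - s • v) =O[𝓝 0] fun s => s ^ 2 := by
    have := hxO2.add (smul_const_isBigO (𝓝 0) (fun s : ℝ => s ^ 2) w)
    simpa using this
  have hxmO : (fun s => x s - m) =O[𝓝 0] fun s => s := by
    have h2 := (hxvO.trans sq_isBigO_self).add (smul_const_isBigO (𝓝 0) (fun s : ℝ => s) v)
    simpa using h2
  have hxm0 : Tendsto x (𝓝 0) (𝓝 m) := by
    rw [← tendsto_sub_nhds_zero_iff]
    exact hxmO.trans_tendsto tendsto_id
  -- the main term
  have hT1 : (fun s => φ (c * s) (x s) - x s - (c * s) • Z (x s)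
      - (1/2 * s ^ 2 : ℝ) • (fderiv ℝ Z (x s) (Z (x s)))) =o[𝓝 0] fun s => s ^ 2 :=
    flow_taylor2 Z hZ φ hφ0 hφ m c hc x hxmO
  -- linear approximation of Z along x
  have hT3 : (fun s => (c * s) • (Z (x s) - Z m - A (x s - m))) =o[𝓝 0] fun s => s ^ 2 := by
    have hdZ : (fun y => Z y - Z m - A (y - m)) =o[𝓝 m] fun y => y - m :=
      (hZd m).hasFDerivAt.isLittleO
    have h1 : (fun s => Z (x s) - Z m - A (x s - m)) =o[𝓝 0] fun s => s :=
      (hdZ.comp_tendsto hxm0).trans_isBigO hxmO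
    have h2 : (fun s : ℝ => c * s) =O[𝓝 0] fun s => s :=
      (isBigO_refl (fun s : ℝ => s) (𝓝 0)).const_mul_left c
    have := h2.smul_isLittleO h1
    simpa [pow_two] using this
  have hT4 : (fun s => (c * s) • (A (x s - m - s • v))) =o[𝓝 0] fun s => s ^ 2 := by
    have h1 : (fun s => A (x s - m - s • v)) =O[𝓝 0] fun s => s ^ 2 :=
      (A.isBigO_comp _ _).trans hxvO
    have h2 : (fun s : ℝ => c * s) =O[𝓝 0] fun s => s :=
      (isBigO_refl (fun s : ℝ => s) (𝓝 0)).const_mul_left c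
    have h3 := h2.smul h1
    have h4 : (fun s : ℝ => s * s ^ 2) =o[𝓝 0] fun s => s ^ 2 := by
      have h5 : (fun s : ℝ => s) =o[𝓝 0] fun _ => (1 : ℝ) :=
        (isLittleO_one_iff ℝ).2 tendsto_id
      have := h5.mul_isBigO (isBigO_refl (fun s : ℝ => s ^ 2) (𝓝 0))
      simpa using this
    exact h3.trans_isLittleO h4
  have hT5 : (fun s => (1/2 * s ^ 2 : ℝ) • (fderiv ℝ Z (x s) (Z (x s)) - A (Z m)))
      =o[𝓝 0] fun s => s ^ 2 := by
    have hu : Tendsto (fun s => fderiv ℝ Z (x s) (Z (x s)) - A (Z m)) (𝓝 0) (𝓝 0) := by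
      have h1 : Tendsto (fun s => (fderiv ℝ Z (x s), Z (x s)))
          (𝓝 0) (𝓝 (A, Z m)) :=
        ((hDZc.tendsto m).comp hxm0).prodMk_nhds ((hZc.tendsto m).comp hxm0)
      have h2 : Tendsto (fun s => fderiv ℝ Z (x s) (Z (x s))) (𝓝 0) (𝓝 (A (Z m))) :=
        (isBoundedBilinearMap_apply.continuous.tendsto (A, Z m)).comp h1
      simpa using h2.sub (tendsto_const_nhds (x := A (Z m)))
    have h3 : (fun s => fderiv ℝ Z (x s) (Z (x s)) - A (Z m)) =o[𝓝 0] fun _ => (1 : ℝ) :=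
      (isLittleO_one_iff ℝ).2 hu
    have h4 : (fun s : ℝ => 1/2 * s ^ 2) =O[𝓝 0] fun s => s ^ 2 :=
      (isBigO_refl (fun s : ℝ => s ^ 2) (𝓝 0)).const_mul_left _
    have := h4.smul_isLittleO h3
    simpa using this
  have heq : (fun s => φ (c * s) (x s) - m - s • (v + c • Z m)
      - s ^ 2 • (w + c • (fderiv ℝ Z m v) + (1/2 : ℝ) • (fderiv ℝ Z m (Z m))))
      = fun s => (φ (c * s) (x s) - x s - (c * s) • Z (x s)
            - (1/2 * s ^ 2 : ℝ) • (fderiv ℝ Z (x s) (Z (x s))))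
        + (x s - m - s • v - s ^ 2 • w)
        + ((c * s) • (Z (x s) - Z m - A (x s - m)))
        + ((c * s) • (A (x s - m - s • v)))
        + ((1/2 * s ^ 2 : ℝ) • (fderiv ℝ Z (x s) (Z (x s)) - A (Z m))) := by
    funext s
    simp only [map_sub, map_smul, hA]
    module
  rw [heq]
  exact (((hT1.add hx).add hT3).add hT4).add hT5

end


/-- For smooth vector fields `X, Y` with flows `φ, ψ`, the Lie bracket `[X,Y](m)`
is the one-sided derivative at `t = 0` of the commutator-of-flows curve
`t ↦ ψ_{-√t} (φ_{-√t} (ψ_{√t} (φ_{√t} m)))`. -/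
theorem stmt10 {E : Type*} [NormedAddCommGroup E] [NormedSpace ℝ E]
    (X Y : E → E) (hX : ContDiff ℝ (⊤ : ℕ∞) X) (hY : ContDiff ℝ (⊤ : ℕ∞) Y)
    (φ ψ : ℝ → E → E)
    (hφ0 : ∀ x, φ 0 x = x) (hψ0 : ∀ x, ψ 0 x = x)
    (hφ : ∀ (t : ℝ) (x : E), HasDerivAt (fun s => φ s x) (X (φ t x)) t)
    (hψ : ∀ (t : ℝ) (x : E), HasDerivAt (fun s => ψ s x) (Y (ψ t x)) t)
    (m : E) :
    HasDerivWithinAt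
      (fun t : ℝ => ψ (-Real.sqrt t) (φ (-Real.sqrt t) (ψ (Real.sqrt t) (φ (Real.sqrt t) m))))
      (VectorField.lieBracket ℝ X Y m) (Set.Ici 0) 0 := by
  have a0 : (fun s : ℝ => (fun _ : ℝ => m) s - m - s • (0:E) - s ^ 2 • (0:E))
      =o[𝓝 0] fun s => s ^ 2 := by
    have he : (fun s : ℝ => (fun _ : ℝ => m) s - m - s • (0:E) - s ^ 2 • (0:E))
        = fun _ => (0:E) := by funext s; simp
    rw [he]
    exact isLittleO_zero _ _
  have h1 := flow_step X hX φ hφ0 hφ m 1 (Or.inl rfl) (fun _ => m) 0 0 a0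
  have h2 := flow_step Y hY ψ hψ0 hψ m 1 (Or.inl rfl)
    (fun s => φ (1 * s) m) _ _ h1
  have h3 := flow_step X hX φ hφ0 hφ m (-1) (Or.inr rfl)
    (fun s => ψ (1 * s) (φ (1 * s) m)) _ _ h2
  have h4 := flow_step Y hY ψ hψ0 hψ m (-1) (Or.inr rfl)
    (fun s => φ (-1 * s) (ψ (1 * s) (φ (1 * s) m))) _ _ h3
  -- simplify the first and second order coefficients
  have hV : (0 + (1:ℝ) • X m + (1:ℝ) • Y m + (-1:ℝ) • X m + (-1:ℝ) • Y m : E) = 0 := by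
    module
  have hW : ((0:E) + (1:ℝ) • (fderiv ℝ X m (0:E)) + (1/2:ℝ) • (fderiv ℝ X m (X m))
      + (1:ℝ) • (fderiv ℝ Y m (0 + (1:ℝ) • X m)) + (1/2:ℝ) • (fderiv ℝ Y m (Y m))
      + (-1:ℝ) • (fderiv ℝ X m (0 + (1:ℝ) • X m + (1:ℝ) • Y m))
      + (1/2:ℝ) • (fderiv ℝ X m (X m))
      + (-1:ℝ) • (fderiv ℝ Y m (0 + (1:ℝ) • X m + (1:ℝ) • Y m + (-1:ℝ) • X m))
      + (1/2:ℝ) • (fderiv ℝ Y m (Y m)))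
      = VectorField.lieBracket ℝ X Y m := by
    simp only [map_add, map_smul, map_zero, VectorField.lieBracket]
    module
  rw [hV, hW] at h4
  simp only [smul_zero, sub_zero] at h4
  have hsq : Filter.Tendsto Real.sqrt (𝓝[Set.Ici 0] 0) (𝓝 0) := by
    have h := Real.continuous_sqrt.tendsto 0
    rw [Real.sqrt_zero] at h
    exact h.mono_left nhdsWithin_le_nhds
  have h5 := h4.comp_tendsto hsq
  rw [hasDerivWithinAt_iff_isLittleO]
  have hmem : ∀ᶠ t : ℝ in 𝓝[Set.Ici 0] 0, 0 ≤ t :=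
    eventually_mem_nhdsWithin.mono fun t ht => ht
  refine h5.congr' ?_ ?_
  · filter_upwards [hmem] with t ht
    simp only [Function.comp_apply, one_mul, neg_one_mul, Real.sqrt_zero, neg_zero,
      hφ0, hψ0, sub_zero, Real.sq_sqrt ht]
  · filter_upwards [hmem] with t ht
    simp [Real.sq_sqrt ht]
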